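/- arXiv:2101.09950 — 4 statements merged into one kernel-verified Lean document; each statement's English description precedes it below -/
import Mathlib

section
/- Let E be a real Banach space and let λ be an infinite cardinal equal to the least cardinality of a dense subset of the continuous dual space E* (with the dual norm). Then the least cardinality of a dense subset of the space K(E) of compact operators on E, equipped with the operator norm, is also λ. -/
open Cardinal

/-- The density of a topological space: the least cardinality of a dense subset. -/
noncomputable def densityCard (Y : Type u) [TopologicalSpace Y] : Cardinal.{u} :=
  sInf {c : Cardinal.{u} | ∃ D : Set Y, Dense D ∧ #D = c}

/-!
For a functional `g` with `g u = 1`, the map `T ↦ g ∘ T` sends `K(E)` continuously onto `E*`,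
since it takes the rank-one operator `f(·) u` to `f`; hence `dens E* ≤ dens K(E)`.

Conversely, take dense sets `D ⊆ E` and `D* ⊆ E*` of size at most `λ`; such a `D` exists because
points of the unit ball that half-norm the functionals of `D*` span a dense subspace. Up to `10ε`,
a compact operator `T` is determined by finite data: a finite `ε`-net `Y ⊆ D` of the image of the
unit ball, and a finite `P ⊆ D* × D*` whose first components `ε`-approximate every functional of
the dual unit ball on `Y`, and whose second components are `ε`-close to the first ones composed
with `T`. Testing `T - S` against a norming functional `h` and splitting `h ∘ T` through such a
pair gives the bound. There are at most `λ` such data, so for every `ε` the space `K(E)` is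
covered by `λ` sets of diameter at most `ε`.
-/

open Metric Set

section Density

variable {X Y : Type u} [TopologicalSpace X] [TopologicalSpace Y]

theorem densityCard_le_mk {D : Set X} (hD : Dense D) : densityCard X ≤ #D :=
  csInf_le' ⟨D, hD, rfl⟩

theorem exists_dense_mk_eq_densityCard (X : Type u) [TopologicalSpace X] :
    ∃ D : Set X, Dense D ∧ #D = densityCard X :=
  csInf_mem (s := {c | ∃ D : Set X, Dense D ∧ #D = c}) ⟨_, univ, dense_univ, rfl⟩

theorem densityCard_le_of_denseRange {f : X → Y} (hf : Continuous f) (hfd : DenseRange f) :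
    densityCard Y ≤ densityCard X := by
  obtain ⟨D, hD, hDcard⟩ := exists_dense_mk_eq_densityCard X
  calc densityCard Y ≤ #(f '' D) := densityCard_le_mk (hfd.dense_image hf hD)
    _ ≤ densityCard X := hDcard ▸ mk_image_le

-- Distances rather than `Metric.diam`, whose junk value on unbounded sets is `0`.
theorem densityCard_le_of_forall_cover {X ι : Type u} [PseudoMetricSpace X]
    (hcover : ∀ ε > 0, ∃ c : ι → Set X, (∀ x, ∃ i, x ∈ c i) ∧
      ∀ i, ∀ x ∈ c i, ∀ y ∈ c i, dist x y ≤ ε) :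
    densityCard X ≤ max #ι ℵ₀ := by
  rcases isEmpty_or_nonempty X with _ | ⟨⟨x₀⟩⟩
  · calc densityCard X ≤ #(∅ : Set X) := densityCard_le_mk fun x => isEmptyElim x
      _ ≤ max #ι ℵ₀ := by simp
  choose c hcov hsmall using fun n : ℕ => hcover (1 / (n + 1)) Nat.one_div_pos_of_nat
  classical
  let pick : ℕ × ι → X := fun p => if h : (c p.1 p.2).Nonempty then h.some else x₀
  have hdense : Dense (range pick) := by
    refine Metric.dense_iff.2 fun x r hr => ?_
    obtain ⟨n, hn⟩ := exists_nat_one_div_lt hr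
    obtain ⟨i, hi⟩ := hcov n x
    have hne : (c n i).Nonempty := ⟨x, hi⟩
    refine ⟨pick (n, i), ?_, mem_range_self _⟩
    rw [mem_ball, dist_comm]
    have hpick : pick (n, i) = hne.some := dif_pos hne
    exact (hsmall n i x hi _ (hpick ▸ hne.some_mem)).trans_lt hn
  calc densityCard X ≤ #(range pick) := densityCard_le_mk hdense
    _ ≤ #(ℕ × ι) := mk_range_le
    _ = ℵ₀ * #ι := by simp
    _ ≤ max #ι ℵ₀ := (mul_le_max_of_aleph0_le_left le_rfl).trans_eq (max_comm _ _)

end Density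

theorem exists_finite_subset_forall_dist_lt_of_totallyBounded {α : Type*} [PseudoMetricSpace α]
    {s Z : Set α} (hs : TotallyBounded s) (hsZ : s ⊆ closure Z) {ε : ℝ} (hε : 0 < ε) :
    ∃ F ⊆ Z, F.Finite ∧ ∀ x ∈ s, ∃ z ∈ F, dist x z < ε := by
  obtain ⟨t, hts, htfin, hst⟩ := finite_approx_of_totallyBounded hs (ε / 2) (half_pos hε)
  choose! z hzZ hz using fun y (hy : y ∈ t) =>
    mem_closure_iff.1 (hsZ (hts hy)) (ε / 2) (half_pos hε)
  refine ⟨z '' t, image_subset_iff.2 hzZ, htfin.image z, fun x hx => ?_⟩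
  obtain ⟨y, hy, hxy⟩ := mem_iUnion₂.1 (hst hx)
  exact ⟨z y, mem_image_of_mem z hy,
    (dist_triangle x y (z y)).trans_lt (by linarith [mem_ball.1 hxy, hz y hy])⟩

theorem mk_finset_le_max (α : Type*) : #(Finset α) ≤ max ℵ₀ #α := by
  classical
  exact (mk_le_of_surjective List.toFinset_surjective).trans (mk_list_le_max α)

section NormedSpace

variable {E : Type u} [NormedAddCommGroup E] [NormedSpace ℝ E]

def ratCombinations (S : Set E) : Set E :=
  range fun l : List (ℚ × S) => (l.map fun p => (p.1 : ℝ) • (p.2 : E)).sum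

theorem mk_ratCombinations_le (S : Set E) : #(ratCombinations S) ≤ max #S ℵ₀ :=
  calc #(ratCombinations S) ≤ #(List (ℚ × S)) := mk_range_le
    _ ≤ max ℵ₀ #(ℚ × S) := mk_list_le_max _
    _ ≤ max #S ℵ₀ := by
      rw [max_comm, mk_prod, Cardinal.mkRat, lift_aleph0, lift_uzero]
      exact max_le ((mul_le_max_of_aleph0_le_left le_rfl).trans_eq (max_comm _ _))
        (le_max_right _ _)

theorem span_subset_closure_ratCombinations (S : Set E) :
    (Submodule.span ℝ S : Set E) ⊆ closure (ratCombinations S) := by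
  have hadd : ∀ a ∈ ratCombinations S, ∀ b ∈ ratCombinations S, a + b ∈ ratCombinations S := by
    rintro _ ⟨l₁, rfl⟩ _ ⟨l₂, rfl⟩
    exact ⟨l₁ ++ l₂, by simp⟩
  have hsmul : ∀ q ∈ range ((↑) : ℚ → ℝ), ∀ a ∈ ratCombinations S, q • a ∈ ratCombinations S := by
    rintro _ ⟨q, rfl⟩ _ ⟨l, rfl⟩
    refine ⟨l.map fun p => (q * p.1, p.2), ?_⟩
    simp [List.smul_sum, Function.comp_def, mul_smul]
  intro v hv
  induction hv using Submodule.span_induction with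
  | mem x hx => exact subset_closure ⟨[(1, ⟨x, hx⟩)], by simp⟩
  | zero => exact subset_closure ⟨[], by simp⟩
  | add x y _ _ hx hy => exact map_mem_closure₂ continuous_add hx hy hadd
  | smul r x _ hx => exact map_mem_closure₂ continuous_smul (Rat.denseRange_cast r) hx hsmul

theorem densityCard_le_of_dense_span {S : Set E} (hS : Dense (Submodule.span ℝ S : Set E)) :
    densityCard E ≤ max #S ℵ₀ :=
  (densityCard_le_mk (hS.mono (span_subset_closure_ratCombinations S) |>.of_closure)).trans
    (mk_ratCombinations_le S)

theorem exists_dual_ne_zero_of_not_dense {p : Submodule ℝ E} (hp : ¬ Dense (p : Set E)) :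
    ∃ g : StrongDual ℝ E, g ≠ 0 ∧ ∀ x ∈ p, g x = 0 := by
  obtain ⟨z, hz⟩ : ∃ z, z ∉ p.topologicalClosure := by
    by_contra! h
    exact hp (dense_iff_closure_eq.2 (eq_univ_of_forall h))
  -- makes `E ⧸ p.topologicalClosure` a normed space, whose dual separates points
  have : IsClosed (p.topologicalClosure : Set E) := p.isClosed_topologicalClosure
  obtain ⟨f, hf⟩ := SeparatingDual.exists_ne_zero (R := ℝ)
    (x := p.topologicalClosure.mkQ z) (by simpa using hz)
  refine ⟨f.comp p.topologicalClosure.mkQL, fun h => hf ?_, fun x hx => ?_⟩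
  · simpa using congr($h z)
  · simp [(Submodule.Quotient.mk_eq_zero _).2 (p.le_topologicalClosure hx)]

theorem ContinuousLinearMap.exists_norm_le_one_half_opNorm_le {F : Type*}
    [NormedAddCommGroup F] [NormedSpace ℝ F] (f : E →L[ℝ] F) :
    ∃ x, ‖x‖ ≤ 1 ∧ ‖f‖ / 2 ≤ ‖f x‖ := by
  rcases eq_or_ne f 0 with rfl | hf
  · exact ⟨0, by simp⟩
  · obtain ⟨x, hx, hfx⟩ := f.exists_lt_apply_of_lt_opNorm (half_lt_self (norm_pos_iff.2 hf))
    exact ⟨x, hx.le, hfx.le⟩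

theorem dense_span_of_half_norming {Dstar : Set (StrongDual ℝ E)} (hDstar : Dense Dstar)
    {S : Set E} (hS : ∀ d ∈ Dstar, ∃ x ∈ S, ‖x‖ ≤ 1 ∧ ‖d‖ / 2 ≤ ‖d x‖) :
    Dense (Submodule.span ℝ S : Set E) := by
  by_contra hnd
  obtain ⟨g, hg, hgS⟩ := exists_dual_ne_zero_of_not_dense hnd
  obtain ⟨d, hd, hgd⟩ := hDstar.exists_dist_lt g (by positivity : 0 < ‖g‖ / 4)
  obtain ⟨x, hxS, hx, hdx⟩ := hS d hd
  rw [dist_eq_norm] at hgd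
  have hdx_small : ‖d x‖ ≤ ‖g - d‖ := by
    have := (g - d).le_opNorm x
    rw [sub_apply, hgS x (Submodule.subset_span hxS), zero_sub, norm_neg] at this
    exact this.trans (mul_le_of_le_one_right (norm_nonneg _) hx)
  have hd_large : ‖g‖ - ‖g - d‖ ≤ ‖d‖ := by
    simpa using norm_sub_norm_le g (g - d)
  have : 0 < ‖g‖ := norm_pos_iff.2 hg
  linarith

theorem densityCard_le_densityCard_strongDual :
    densityCard E ≤ max (densityCard (StrongDual ℝ E)) ℵ₀ := by
  obtain ⟨Dstar, hDstar, hcard⟩ := exists_dense_mk_eq_densityCard (StrongDual ℝ E)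
  choose x hx using fun d : StrongDual ℝ E => d.exists_norm_le_one_half_opNorm_le
  have hspan : Dense (Submodule.span ℝ (x '' Dstar) : Set E) :=
    dense_span_of_half_norming hDstar fun d hd => ⟨x d, mem_image_of_mem x hd, hx d⟩
  calc densityCard E ≤ max #(x '' Dstar) ℵ₀ := densityCard_le_of_dense_span hspan
    _ ≤ max (densityCard (StrongDual ℝ E)) ℵ₀ := hcard ▸ max_le_max mk_image_le le_rfl

-- The `p.1` come from a dense set of functionals, so they cannot be asked to lie in the unit ball.
def IsDualBallNetOn (ε : ℝ) (Y : Finset E) (P : Finset (StrongDual ℝ E × StrongDual ℝ E)) :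
    Prop :=
  ∀ h : StrongDual ℝ E, ‖h‖ ≤ 1 → ∃ p ∈ P, ‖p.1‖ ≤ 2 ∧ ∀ y ∈ Y, ‖h y - p.1 y‖ ≤ ε

def approxCell (ε : ℝ) (Y : Finset E) (P : Finset (StrongDual ℝ E × StrongDual ℝ E)) :
    Set (E →L[ℝ] E) :=
  {T | (∀ x, ‖x‖ ≤ 1 → ∃ y ∈ Y, ‖T x - y‖ ≤ ε) ∧ ∀ p ∈ P, ‖p.1 ∘L T - p.2‖ ≤ ε}

theorem norm_apply_sub_le_of_mem_approxCell {ε : ℝ} {Y : Finset E}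
    {P : Finset (StrongDual ℝ E × StrongDual ℝ E)} {T : E →L[ℝ] E} (hT : T ∈ approxCell ε Y P)
    {p : StrongDual ℝ E × StrongDual ℝ E} (hp : p ∈ P) (hp₁ : ‖p.1‖ ≤ 2)
    {h : StrongDual ℝ E} (hh : ‖h‖ ≤ 1) (hhp : ∀ y ∈ Y, ‖h y - p.1 y‖ ≤ ε)
    {x : E} (hx : ‖x‖ ≤ 1) :
    ‖h (T x) - p.2 x‖ ≤ 5 * ε := by
  obtain ⟨y, hy, hTxy⟩ := hT.1 x hx
  have hp₂ := hT.2 p hp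
  have hdecomp : h (T x) - p.2 x = (h - p.1) (T x - y) + (h y - p.1 y) + (p.1 ∘L T - p.2) x := by
    simp only [sub_apply, ContinuousLinearMap.comp_apply, map_sub]
    ring
  have h₁ : ‖(h - p.1) (T x - y)‖ ≤ 3 * ε :=
    calc ‖(h - p.1) (T x - y)‖ ≤ ‖h - p.1‖ * ‖T x - y‖ := (h - p.1).le_opNorm _
      _ ≤ 3 * ε := mul_le_mul (by linarith [norm_sub_le h p.1]) hTxy (norm_nonneg _) (by norm_num)
  have h₃ : ‖(p.1 ∘L T - p.2) x‖ ≤ ε :=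
    calc ‖(p.1 ∘L T - p.2) x‖ ≤ ‖p.1 ∘L T - p.2‖ * ‖x‖ := (p.1 ∘L T - p.2).le_opNorm _
      _ ≤ ε := (mul_le_of_le_one_right (norm_nonneg _) hx).trans hp₂
  rw [hdecomp]
  linarith [norm_add₃_le (a := (h - p.1) (T x - y)) (b := h y - p.1 y) (c := (p.1 ∘L T - p.2) x),
    hhp y hy]

theorem norm_sub_le_of_mem_approxCell {ε : ℝ} {Y : Finset E}
    {P : Finset (StrongDual ℝ E × StrongDual ℝ E)} (hP : IsDualBallNetOn ε Y P)
    {T S : E →L[ℝ] E} (hT : T ∈ approxCell ε Y P) (hS : S ∈ approxCell ε Y P) :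
    ‖T - S‖ ≤ 10 * ε := by
  have hε : 0 ≤ ε := by
    obtain ⟨y, -, hy⟩ := hT.1 0 (by simp)
    exact (norm_nonneg _).trans hy
  refine ContinuousLinearMap.opNorm_le_of_unit_norm (by positivity) fun x hx => ?_
  obtain ⟨h, hh, hhx⟩ := exists_dual_vector'' ℝ ((T - S) x)
  obtain ⟨p, hp, hp₁, hhp⟩ := hP h hh
  have hsplit : h ((T - S) x) = (h (T x) - p.2 x) - (h (S x) - p.2 x) := by
    simp only [sub_apply, map_sub]
    ring
  calc ‖(T - S) x‖ = ‖h ((T - S) x)‖ := by rw [hhx]; simp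
    _ ≤ ‖h (T x) - p.2 x‖ + ‖h (S x) - p.2 x‖ := hsplit ▸ norm_sub_le _ _
    _ ≤ 10 * ε := by
      linarith [norm_apply_sub_le_of_mem_approxCell hT hp hp₁ hh hhp hx.le,
        norm_apply_sub_le_of_mem_approxCell hS hp hp₁ hh hhp hx.le]

theorem exists_finset_isDualBallNetOn {Dstar : Set (StrongDual ℝ E)} (hDstar : Dense Dstar)
    (Y : Finset E) {ε : ℝ} (hε : 0 < ε) :
    ∃ G : Finset (StrongDual ℝ E), ↑G ⊆ Dstar ∧ ∀ h : StrongDual ℝ E, ‖h‖ ≤ 1 →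
      ∃ f ∈ G, ‖f‖ ≤ 2 ∧ ∀ y ∈ Y, ‖h y - f y‖ ≤ ε := by
  let r : StrongDual ℝ E →L[ℝ] (Y → ℝ) :=
    ContinuousLinearMap.pi fun y => ContinuousLinearMap.apply ℝ ℝ (y : E)
  have htb : TotallyBounded (r '' closedBall 0 1) :=
    (r.lipschitz.isBounded_image isBounded_closedBall).isCompact_closure.totallyBounded.subset
      subset_closure
  have hclosure : r '' closedBall 0 1 ⊆ closure (r '' (Dstar ∩ ball 0 2)) := by
    refine (image_mono ?_).trans (image_closure_subset_closure_image r.continuous)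
    rw [inter_comm]
    exact (closedBall_subset_ball (by norm_num)).trans
      (hDstar.open_subset_closure_inter isOpen_ball)
  obtain ⟨G, hG, hGfin, hGnet⟩ := exists_subset_image_finite_and.1
    (exists_finite_subset_forall_dist_lt_of_totallyBounded htb hclosure hε)
  refine ⟨hGfin.toFinset, fun f hf => (hG (hGfin.mem_toFinset.1 hf)).1, fun h hh => ?_⟩
  obtain ⟨_, ⟨f, hf, rfl⟩, hhf⟩ := hGnet (r h) (mem_image_of_mem r (mem_closedBall_zero_iff.2 hh))
  refine ⟨f, hGfin.mem_toFinset.2 hf, (mem_ball_zero_iff.1 (hG hf).2).le, fun y hy => ?_⟩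
  simpa [r, dist_eq_norm] using (dist_le_pi_dist (r h) (r f) ⟨y, hy⟩).trans hhf.le

theorem exists_mem_approxCell {D : Set E} (hD : Dense D) {Dstar : Set (StrongDual ℝ E)}
    (hDstar : Dense Dstar) {T : E →L[ℝ] E} (hT : IsCompactOperator T) {ε : ℝ} (hε : 0 < ε) :
    ∃ Y : Finset E, ↑Y ⊆ D ∧ ∃ P : Finset (StrongDual ℝ E × StrongDual ℝ E),
      ↑P ⊆ Dstar ×ˢ Dstar ∧ IsDualBallNetOn ε Y P ∧ T ∈ approxCell ε Y P := by
  classical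
  have htb : TotallyBounded (T '' closedBall 0 1) :=
    (hT.isCompact_closure_image_closedBall 1).totallyBounded.subset subset_closure
  obtain ⟨Y, hYD, hYfin, hYnet⟩ :=
    exists_finite_subset_forall_dist_lt_of_totallyBounded htb (fun x _ => hD x) hε
  obtain ⟨G, hGD, hGnet⟩ := exists_finset_isDualBallNetOn hDstar hYfin.toFinset hε
  choose d hdD hd using fun f : StrongDual ℝ E => hDstar.exists_dist_lt (f ∘L T) hε
  refine ⟨hYfin.toFinset, by simpa using hYD, G.image fun f => (f, d f), ?_, ?_, ?_, ?_⟩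
  · simp only [Finset.coe_image, image_subset_iff]
    exact fun f hf => ⟨hGD hf, hdD f⟩
  · intro h hh
    obtain ⟨f, hf, hf₂, hfY⟩ := hGnet h hh
    exact ⟨(f, d f), Finset.mem_image_of_mem _ hf, hf₂, hfY⟩
  · intro x hx
    obtain ⟨y, hy, hxy⟩ := hYnet (T x) (mem_image_of_mem T (mem_closedBall_zero_iff.2 hx))
    exact ⟨y, hYfin.mem_toFinset.2 hy, (dist_eq_norm (T x) y ▸ hxy).le⟩
  · simp only [Finset.mem_image]
    rintro _ ⟨f, -, rfl⟩
    exact (dist_eq_norm (f ∘L T) (d f) ▸ hd f).le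

theorem exists_cover_compactOperators {D : Set E} (hD : Dense D) {Dstar : Set (StrongDual ℝ E)}
    (hDstar : Dense Dstar) {ε : ℝ} (hε : 0 < ε) :
    ∃ c : Finset D × Finset ↥(Dstar ×ˢ Dstar) → Set {T : E →L[ℝ] E // IsCompactOperator T},
      (∀ T, ∃ i, T ∈ c i) ∧ ∀ i, ∀ T ∈ c i, ∀ S ∈ c i, dist T S ≤ ε := by
  classical
  let Y (i : Finset D × Finset ↥(Dstar ×ˢ Dstar)) := i.1.map (Function.Embedding.subtype _)
  let P (i : Finset D × Finset ↥(Dstar ×ˢ Dstar)) := i.2.map (Function.Embedding.subtype _)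
  refine ⟨fun i => {T | IsDualBallNetOn (ε / 10) (Y i) (P i) ∧
    T.1 ∈ approxCell (ε / 10) (Y i) (P i)}, fun T => ?_, fun i T hT S hS => ?_⟩
  · obtain ⟨Y₀, hY₀, P₀, hP₀, hnet, hcell⟩ :=
      exists_mem_approxCell hD hDstar T.2 (by positivity : 0 < ε / 10)
    refine ⟨(Y₀.subtype (· ∈ D), P₀.subtype (· ∈ Dstar ×ˢ Dstar)), ?_⟩
    simp only [Y, P, Finset.subtype_map_of_mem fun x hx => hY₀ hx,
      Finset.subtype_map_of_mem fun x hx => hP₀ hx]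
    exact ⟨hnet, hcell⟩
  · rw [Subtype.dist_eq, dist_eq_norm]
    linarith [norm_sub_le_of_mem_approxCell hT.1 hT.2 hS.2]

theorem densityCard_compactOperators_le :
    densityCard {T : E →L[ℝ] E // IsCompactOperator T} ≤
      max (densityCard (StrongDual ℝ E)) ℵ₀ := by
  set κ := max (densityCard (StrongDual ℝ E)) ℵ₀
  have hκ : ℵ₀ ≤ κ := le_max_right _ _
  have hmul {a b : Cardinal} (ha : a ≤ κ) (hb : b ≤ κ) : a * b ≤ κ :=
    (mul_le_mul' ha hb).trans (mul_eq_self hκ).le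
  obtain ⟨Dstar, hDstar, hDstar_card⟩ := exists_dense_mk_eq_densityCard (StrongDual ℝ E)
  obtain ⟨D, hD, hD_card⟩ := exists_dense_mk_eq_densityCard E
  refine (densityCard_le_of_forall_cover fun ε hε =>
    exists_cover_compactOperators hD hDstar hε).trans (max_le ?_ hκ)
  rw [mk_prod, lift_id, lift_id]
  refine hmul ((mk_finset_le_max _).trans (max_le hκ ?_))
    ((mk_finset_le_max _).trans (max_le hκ ?_))
  · exact hD_card ▸ densityCard_le_densityCard_strongDual
  · rw [(Equiv.Set.prod Dstar Dstar).cardinal_eq, mk_prod, lift_id, hDstar_card]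
    exact hmul (le_max_left _ _) (le_max_left _ _)

theorem densityCard_strongDual_le_compactOperators :
    densityCard (StrongDual ℝ E) ≤ densityCard {T : E →L[ℝ] E // IsCompactOperator T} := by
  obtain ⟨u, g, hgu⟩ : ∃ (u : E) (g : StrongDual ℝ E), ∀ f : StrongDual ℝ E,
      g ∘L f.smulRight u = f := by
    rcases subsingleton_or_nontrivial E with hE | hE
    · exact ⟨0, 0, fun f => ContinuousLinearMap.ext fun x => by simp [Subsingleton.elim x 0]⟩
    · obtain ⟨u, hu⟩ := exists_ne (0 : E)
      obtain ⟨g, hg⟩ := SeparatingDual.exists_eq_one (R := ℝ) hu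
      exact ⟨u, g, fun f => ContinuousLinearMap.ext fun x => by simp [hg]⟩
  have hrank_one (f : StrongDual ℝ E) : IsCompactOperator (f.smulRight u) :=
    (isCompactOperator_of_locallyCompactSpace_dom f).clm_comp
      (ContinuousLinearMap.toSpanSingleton ℝ u)
  have hsurj : Function.Surjective fun T : {T : E →L[ℝ] E // IsCompactOperator T} => g ∘L T.1 :=
    fun f => ⟨⟨f.smulRight u, hrank_one f⟩, hgu f⟩
  exact densityCard_le_of_denseRange (by fun_prop) hsurj.denseRange

end NormedSpace

theorem statement9_general (E : Type u) [NormedAddCommGroup E] [NormedSpace ℝ E]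
    (lam : Cardinal.{u}) (hlam : Cardinal.aleph0 ≤ lam)
    (hdual : densityCard (E →L[ℝ] ℝ) = lam) :
    densityCard {f : E →L[ℝ] E // IsCompactOperator f} = lam := by
  refine le_antisymm ?_ (hdual ▸ densityCard_strongDual_le_compactOperators)
  simpa [hdual, max_eq_left hlam] using densityCard_compactOperators_le (E := E)

/-- Let `E` be a real Banach space and let `λ` be an infinite cardinal equal to the least
cardinality of a dense subset of the continuous dual space `E*` (with the dual norm). Then the
least cardinality of a dense subset of the space `K(E)` of compact operators on `E`, equipped
with the operator norm, is also `λ`. -/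
theorem statement9 (E : Type u) [NormedAddCommGroup E] [NormedSpace ℝ E] [CompleteSpace E]
    (lam : Cardinal.{u}) (hlam : Cardinal.aleph0 ≤ lam)
    (hdual : densityCard (E →L[ℝ] ℝ) = lam) :
    densityCard {f : E →L[ℝ] E // IsCompactOperator f} = lam :=
  statement9_general E lam hlam hdual
end

section
/- Let κ be an infinite cardinal and let (A_i)_{i ∈ I} be a family of unital real Banach algebras, each having a dense subset of cardinality at most κ, such that for distinct i, j ∈ I there is no continuous algebra isomorphism between A_i and A_j. Then the cardinality of I is at most 2^κ. -/
/-!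
Fix a set `X` of cardinality `κ` and let `T` be the free ring on `X`. Each `A i` receives a ring
map `ψ i : T → A i` with dense range (send `X` onto a dense subset), so `A i` is the completion
of `T` for the pseudometric `dist (ψ i s) (ψ i t)`. Two indices with the same pseudometric give
uniformly equivalent completions, and the comparison map is a continuous ring isomorphism,
hence `ℝ`-linear. So `i ↦ dist ∘ (ψ i × ψ i)` is injective into `T × T → ℝ`, a set of
cardinality `𝔠 ^ κ = 2 ^ κ`.
-/

open Cardinal

universe u

section Completion

variable {T B C : Type*} [Semiring T] [UniformSpace T]
  [Semiring B] [UniformSpace B] [IsTopologicalSemiring B] [CompleteSpace B] [T0Space B]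
  [Semiring C] [UniformSpace C] [IsTopologicalSemiring C] [CompleteSpace C] [T0Space C]

theorem exists_continuous_ringEquiv_of_isUniformInducing (f : T →+* B) (g : T →+* C)
    (hf : IsUniformInducing f) (hg : IsUniformInducing g)
    (hfd : DenseRange f) (hgd : DenseRange g) :
    ∃ e : B ≃+* C, Continuous e := by
  let pkgB : AbstractCompletion T := ⟨B, f, inferInstance, inferInstance, inferInstance, hf, hfd⟩
  let pkgC : AbstractCompletion T := ⟨C, g, inferInstance, inferInstance, inferInstance, hg, hgd⟩
  let e : B ≃ᵤ C := pkgB.compareEquiv pkgC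
  have he : ∀ t, e (f t) = g t := pkgB.compare_coe pkgC
  have hc : Continuous e := e.continuous
  have map_add : ∀ x y, e (x + y) = e x + e y := by
    refine fun x y => hfd.induction_on₂ (isClosed_eq (by fun_prop) (by fun_prop))
      (fun s t => ?_) x y
    rw [← RingHom.map_add, he, he, he, RingHom.map_add]
  have map_mul : ∀ x y, e (x * y) = e x * e y := by
    refine fun x y => hfd.induction_on₂ (isClosed_eq (by fun_prop) (by fun_prop))
      (fun s t => ?_) x y
    rw [← RingHom.map_mul, he, he, he, RingHom.map_mul]
  exact ⟨{ e.toEquiv with map_add' := map_add, map_mul' := map_mul }, hc⟩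

end Completion

theorem exists_continuous_ringEquiv_of_dist_eq {T B C : Type*} [Semiring T]
    [Semiring B] [MetricSpace B] [IsTopologicalSemiring B] [CompleteSpace B]
    [Semiring C] [MetricSpace C] [IsTopologicalSemiring C] [CompleteSpace C]
    (f : T →+* B) (g : T →+* C) (hfd : DenseRange f) (hgd : DenseRange g)
    (h : ∀ s t, dist (f s) (f t) = dist (g s) (g t)) :
    ∃ e : B ≃+* C, Continuous e := by
  let _ : PseudoMetricSpace T := .induced f inferInstance
  exact exists_continuous_ringEquiv_of_isUniformInducing f g
    (Isometry.of_dist_eq (f := f) fun _ _ => rfl).isUniformInducing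
    (Isometry.of_dist_eq fun s t => (h s t).symm).isUniformInducing hfd hgd

def RingEquiv.toRealAlgEquiv {B C : Type*}
    [Ring B] [Algebra ℝ B] [TopologicalSpace B] [ContinuousSMul ℝ B]
    [Ring C] [Algebra ℝ C] [TopologicalSpace C] [ContinuousSMul ℝ C] [T2Space C]
    (e : B ≃+* C) (he : Continuous e) : B ≃ₐ[ℝ] C :=
  AlgEquiv.ofRingEquiv (f := e) fun r => by
    rw [Algebra.algebraMap_eq_smul_one, Algebra.algebraMap_eq_smul_one, map_real_smul e he,
      map_one]

theorem Dense.exists_denseRange_of_mk_le {A X : Type u} [TopologicalSpace A] {D : Set A}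
    (hD : Dense D) [Nonempty A] (hDX : #D ≤ #X) : ∃ f : X → A, DenseRange f := by
  have := hD.nonempty.to_subtype
  obtain ⟨f, hf⟩ := Function.exists_surjective_iff.2 ⟨inferInstance, hDX⟩
  exact ⟨(↑) ∘ f, hD.denseRange_val.comp hf.denseRange continuous_subtype_val⟩

theorem mk_freeAlgebra_int_le {X : Type u} {κ : Cardinal.{u}} (hκ : ℵ₀ ≤ κ) (hX : #X ≤ κ) :
    #(FreeAlgebra ℤ X) ≤ κ :=
  (FreeAlgebra.cardinalMk_le_max_lift ℤ X).trans <| by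
    simpa only [mk_int, lift_aleph0, lift_uzero] using max_le (max_le hκ hX) hκ

theorem mk_arrow_real_le_two_power {α : Type u} {κ : Cardinal.{u}} (hκ : ℵ₀ ≤ κ) (hα : #α ≤ κ) :
    #(α → ℝ) ≤ 2 ^ κ :=
  calc #(α → ℝ) = 𝔠 ^ #α := by rw [mk_arrow, mk_real, lift_continuum, lift_uzero]
    _ ≤ 𝔠 ^ κ := power_le_power_left continuum_ne_zero hα
    _ = 2 ^ κ := by rw [← two_power_aleph0, ← power_mul, aleph0_mul_eq hκ]

/-- Let `κ` be an infinite cardinal and let `(A i)_{i ∈ I}` be a family of unital real Banach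
algebras, each having a dense subset of cardinality at most `κ`, such that for distinct
`i, j ∈ I` there is no continuous algebra isomorphism between `A i` and `A j`. Then the
cardinality of `I` is at most `2 ^ κ`. -/
theorem statement11 (κ : Cardinal.{u}) (hκ : Cardinal.aleph0 ≤ κ)
    (I : Type u) (A : I → Type u)
    [∀ i, NormedRing (A i)] [∀ i, NormedAlgebra ℝ (A i)] [∀ i, CompleteSpace (A i)]
    (hdense : ∀ i, ∃ D : Set (A i), Dense D ∧ #D ≤ κ)
    (hiso : ∀ i j, i ≠ j → ¬∃ e : A i ≃ₐ[ℝ] A j, Continuous e) :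
    #I ≤ 2 ^ κ := by
  have hX : #κ.out = κ := mk_out κ
  have hφ : ∀ i, ∃ φ : κ.out → A i, DenseRange φ := fun i => by
    obtain ⟨D, hD, hDκ⟩ := hdense i
    exact hD.exists_denseRange_of_mk_le (hDκ.trans_eq hX.symm)
  choose φ hφ using hφ
  let T := FreeAlgebra ℤ κ.out
  let ψ : ∀ i, T →+* A i := fun i => (FreeAlgebra.lift ℤ (φ i)).toRingHom
  have hψ : ∀ i, DenseRange (ψ i) := fun i =>
    (hφ i).mono (Set.range_subset_iff.2 fun x => ⟨FreeAlgebra.ι ℤ x, FreeAlgebra.lift_ι_apply _ _⟩)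
  let code : I → T × T → ℝ := fun i p => dist (ψ i p.1) (ψ i p.2)
  have hcode : Function.Injective code := fun i j hij => by_contra fun hne => by
    obtain ⟨e, he⟩ := exists_continuous_ringEquiv_of_dist_eq (ψ i) (ψ j) (hψ i) (hψ j)
      fun s t => congr_fun hij (s, t)
    exact hiso i j hne ⟨e.toRealAlgEquiv he, he⟩
  have hT : #T ≤ κ := mk_freeAlgebra_int_le hκ hX.le
  calc #I ≤ #(T × T → ℝ) := mk_le_of_injective hcode
    _ ≤ 2 ^ κ := mk_arrow_real_le_two_power hκ <| by
      rw [mk_prod, lift_id]; exact (mul_le_mul' hT hT).trans (mul_eq_self hκ).le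
end

section
/- Let E and F be real Banach spaces, let A₁ be a closed subalgebra of the algebra B(E) of bounded linear operators on E that contains every bounded linear operator on E whose range is finite-dimensional, and let A₂ be a closed subalgebra of B(F) containing every bounded finite-rank operator on F. If A₁ and A₂ are isomorphic as rings, then E and F are isomorphic as Banach spaces, i.e. there exists a continuous linear bijection from E onto F with continuous inverse. -/
/-!
A rank-one operator `p = ξ₀ ⊗ x₀` with `ξ₀ x₀ = 1` is a minimal idempotent of `A₁`, a purely
ring-theoretic property, and the minimal idempotents of `A₂` are again rank-one, so
`φ p = η₀ ⊗ y₀`. The left ideals `A₁ p ≅ E` and `A₂ (φ p) ≅ F` then correspond under `φ`: this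
gives an additive bijection `T : E → F` with `φ (ξ₀ ⊗ x) = η₀ ⊗ T x` and `T (a z) = φ a (T z)`.
It is `ℝ`-linear because `φ` induces a ring endomorphism of the corner `ℝ p ≅ ℝ`, and continuous
by the closed graph theorem, since each `η ∘ T` equals `ξ₀ ∘ φ⁻¹ (η ⊗ y₀)`.
-/

open Cardinal

open ContinuousLinearMap

section MinimalIdempotent

variable {R S : Type*} [NonUnitalRing R] [NonUnitalRing S]

/-- Every nonzero element of the corner `p * R * p` has a left inverse there, i.e. the corner is
a division ring with unit `p`. -/
def IsMinimalIdempotent (p : R) : Prop :=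
  IsIdempotentElem p ∧ p ≠ 0 ∧ ∀ a, p * a * p ≠ 0 → ∃ b, b * (p * a * p) = p

theorem IsMinimalIdempotent.map {p : R} (hp : IsMinimalIdempotent p) (φ : R ≃+* S) :
    IsMinimalIdempotent (φ p) := by
  obtain ⟨hidem, hne, hdiv⟩ := hp
  refine ⟨hidem.map φ, (map_ne_zero_iff φ φ.injective).2 hne, fun c hc => ?_⟩
  have hcorner : φ p * c * φ p = φ (p * φ.symm c * p) := by
    simp only [map_mul, φ.apply_symm_apply]
  rw [hcorner] at hc ⊢
  obtain ⟨b, hb⟩ := hdiv _ fun h => hc (by rw [h, map_zero])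
  exact ⟨φ b, by rw [← map_mul, hb]⟩

theorem isMinimalIdempotent_of_forall_mul_mul_eq_smul {K : Type*} [Field K] [Module K R]
    [IsScalarTower K R R] [SMulCommClass K R R] {p : R} (hp : IsIdempotentElem p) (hp0 : p ≠ 0)
    (h : ∀ a, ∃ t : K, p * a * p = t • p) : IsMinimalIdempotent p := by
  refine ⟨hp, hp0, fun a ha => ?_⟩
  obtain ⟨t, ht⟩ := h a
  have ht0 : t ≠ 0 := by rintro rfl; exact ha (by rw [ht, zero_smul])
  exact ⟨t⁻¹ • p, by rw [ht, smul_mul_smul_comm, inv_mul_cancel₀ ht0, one_smul, hp.eq]⟩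

/-- `φ` maps the scalars `ℝ • p` into the one-dimensional corner at `φ p`; the induced map
`ℝ → ℝ` is a ring endomorphism, hence the identity. -/
theorem RingEquiv.map_smul_of_isIdempotentElem [Module ℝ R] [IsScalarTower ℝ R R]
    [SMulCommClass ℝ R R] [Module ℝ S] [IsScalarTower ℝ S S] [SMulCommClass ℝ S S]
    [Module.IsTorsionFree ℝ S] (φ : R ≃+* S) {p : R} (hp : IsIdempotentElem p) (he : φ p ≠ 0)
    (hcorner : ∀ c, ∃ s : ℝ, φ p * c * φ p = s • φ p) (t : ℝ) : φ (t • p) = t • φ p := by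
  choose σ hσ using fun t : ℝ => hcorner (φ (t • p))
  have hφ : ∀ t, φ (t • p) = σ t • φ p := fun t => by
    rw [← hσ, ← map_mul, ← map_mul, mul_smul_comm, smul_mul_assoc, hp.eq, hp.eq]
  have inj := smul_left_injective ℝ he
  let σ' : ℝ →+* ℝ :=
    { toFun := σ
      map_one' := inj (by simp only [← hφ, one_smul])
      map_mul' := fun s t => inj (by
        have hst : (s * t) • p = (s • p) * (t • p) := by rw [smul_mul_smul_comm, hp.eq]
        simp only [← hφ]
        rw [hst, map_mul, hφ, hφ, smul_mul_smul_comm, (hp.map φ).eq])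
      map_zero' := inj (by simp only [← hφ, zero_smul, map_zero])
      map_add' := fun s t => inj (by simp only [← hφ, add_smul, map_add]) }
  rw [hφ, show σ t = t from DFunLike.congr_fun (Subsingleton.elim σ' (RingHom.id ℝ)) t]

end MinimalIdempotent

theorem LinearMap.continuous_of_forall_continuous_dual_comp {𝕜 E F : Type*}
    [NontriviallyNormedField 𝕜] [NormedAddCommGroup E] [NormedSpace 𝕜 E] [CompleteSpace E]
    [NormedAddCommGroup F] [NormedSpace 𝕜 F] [CompleteSpace F] [SeparatingDual 𝕜 F]
    (T : E →ₗ[𝕜] F) (h : ∀ η : StrongDual 𝕜 F, Continuous (η ∘ T)) : Continuous T := by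
  refine T.continuous_of_isClosed_graph ?_
  have hgraph : (T.graph : Set (E × F)) = ⋂ η : StrongDual 𝕜 F, {q | η q.2 = η (T q.1)} := by
    ext q
    simp [LinearMap.mem_graph_iff, SeparatingDual.eq_iff_forall_dual_eq (R := 𝕜)]
  rw [hgraph]
  exact isClosed_iInter fun η =>
    isClosed_eq (η.continuous.comp continuous_snd) ((h η).comp continuous_fst)

section RankOne

variable {G : Type*} [NormedAddCommGroup G] [NormedSpace ℝ G]

theorem finiteDimensional_range_smulRight (ξ : StrongDual ℝ G) (x : G) :
    FiniteDimensional ℝ (LinearMap.range (ξ.smulRight x : G →ₗ[ℝ] G)) := by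
  refine Submodule.finiteDimensional_of_le (S₂ := Submodule.span ℝ {x}) ?_
  rintro _ ⟨z, rfl⟩
  exact Submodule.smul_mem _ (ξ z) (Submodule.mem_span_singleton_self x)

theorem mul_smulRight (a : G →L[ℝ] G) (ξ : StrongDual ℝ G) (x : G) :
    a * ξ.smulRight x = ξ.smulRight (a x) := by
  ext; simp

theorem smulRight_mul_mul_smulRight (ξ : StrongDual ℝ G) (x : G) (a : G →L[ℝ] G) :
    ξ.smulRight x * a * ξ.smulRight x = ξ (a x) • ξ.smulRight x := by
  ext; simp [smul_smul, mul_comm]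

variable {A : NonUnitalSubalgebra ℝ (G →L[ℝ] G)}

theorem isMinimalIdempotent_smulRight {ξ : StrongDual ℝ G} {x : G} (h : ξ.smulRight x ∈ A)
    (hξx : ξ x = 1) : IsMinimalIdempotent (⟨ξ.smulRight x, h⟩ : A) := by
  refine isMinimalIdempotent_of_forall_mul_mul_eq_smul (K := ℝ) ?_ ?_ fun a =>
    ⟨ξ ((a : G →L[ℝ] G) x), Subtype.ext (smulRight_mul_mul_smulRight ξ x a)⟩
  · exact Subtype.ext (by simpa [hξx] using smulRight_mul_mul_smulRight ξ x 1)
  · intro h0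
    have hx := congr_arg (fun a : A => (a : G →L[ℝ] G) x) h0
    simp [hξx] at hx
    simp [hx] at hξx

theorem subsingleton_of_forall_smulRight_mem [Subsingleton A]
    (hA : ∀ (ξ : StrongDual ℝ G) (x : G), ξ.smulRight x ∈ A) : Subsingleton G := by
  refine subsingleton_of_forall_eq 0 fun y => by_contra fun hy => ?_
  obtain ⟨χ, hχ⟩ := SeparatingDual.exists_eq_one (R := ℝ) hy
  have hy0 := congr_arg (fun a : A => (a : G →L[ℝ] G) y)
    (Subsingleton.elim (⟨χ.smulRight y, hA χ y⟩ : A) 0)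
  simp [hχ] at hy0
  exact hy hy0

/-- The fixed space of a minimal idempotent is at most one-dimensional. -/
theorem IsMinimalIdempotent.dual_apply_eq_zero
    (hA : ∀ (ξ : StrongDual ℝ G) (x : G), ξ.smulRight x ∈ A) {e : A} (he : IsMinimalIdempotent e)
    {u y : G} (hu : (e : G →L[ℝ] G) u = u)
    (hy : (e : G →L[ℝ] G) y = y) (hy0 : y ≠ 0) {ζ : StrongDual ℝ G} (hζ : ζ y = 0) : ζ u = 0 := by
  by_contra hζu
  let c : A := ⟨ζ.smulRight y, hA ζ y⟩
  have hcu : ((e * c * e : A) : G →L[ℝ] G) u = ζ u • y := by simp [c, hu, hy]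
  have hcy : ((e * c * e : A) : G →L[ℝ] G) y = 0 := by simp [c, hy, hζ]
  obtain ⟨b, hb⟩ := he.2.2 c fun h => hζu (by simpa [h, hy0] using hcu.symm)
  apply hy0
  calc y = (e : G →L[ℝ] G) y := hy.symm
    _ = ((b * (e * c * e) : A) : G →L[ℝ] G) y := by rw [hb]
    _ = 0 := by rw [MulMemClass.coe_mul, mul_apply_eq_comp, hcy, map_zero]

theorem IsMinimalIdempotent.exists_eq_smulRight
    (hA : ∀ (ξ : StrongDual ℝ G) (x : G), ξ.smulRight x ∈ A) {e : A} (he : IsMinimalIdempotent e) :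
    ∃ (η : StrongDual ℝ G) (y : G), η y = 1 ∧ (e : G →L[ℝ] G) = η.smulRight y := by
  have hfix : ∀ z, (e : G →L[ℝ] G) ((e : G →L[ℝ] G) z) = (e : G →L[ℝ] G) z := fun z =>
    congr_arg (fun a : A => (a : G →L[ℝ] G) z) he.1.eq
  obtain ⟨y, hy, hy0⟩ : ∃ y, (e : G →L[ℝ] G) y = y ∧ y ≠ 0 := by
    by_contra! h
    exact he.2.1 (Subtype.ext (ContinuousLinearMap.ext fun w => h _ (hfix w)))
  obtain ⟨χ, hχ⟩ := SeparatingDual.exists_eq_one (R := ℝ) hy0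
  refine ⟨χ.comp (e : G →L[ℝ] G), y, by rw [comp_apply, hy, hχ], ?_⟩
  ext z
  rw [smulRight_apply, comp_apply, ← sub_eq_zero]
  set u := (e : G →L[ℝ] G) z - χ ((e : G →L[ℝ] G) z) • y
  have hu : (e : G →L[ℝ] G) u = u := by simp only [u, map_sub, map_smul, hfix, hy]
  have hχu : χ u = 0 := by simp [u, hχ]
  refine SeparatingDual.eq_zero_of_forall_dual_eq_zero (R := ℝ) fun ζ => ?_
  have := he.dual_apply_eq_zero hA hu hy hy0 (ζ := ζ - ζ y • χ) (by simp [hχ])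
  simpa [hχu] using this

end RankOne

section Spatial

variable {E F : Type*} [NormedAddCommGroup E] [NormedSpace ℝ E] [NormedAddCommGroup F]
  [NormedSpace ℝ F] {A₁ : NonUnitalSubalgebra ℝ (E →L[ℝ] E)}
  {A₂ : NonUnitalSubalgebra ℝ (F →L[ℝ] F)} (φ : A₁ ≃+* A₂) {ξ₀ : StrongDual ℝ E}
  (hξ₀ : ∀ x, ξ₀.smulRight x ∈ A₁) (y₀ : F)

/-- Transports `E ≅ A₁ (ξ₀ ⊗ x₀)`, `x ↦ ξ₀ ⊗ x`, along `φ`; see `coe_map_smulRight`. -/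
def spatialMap (x : E) : F :=
  (φ ⟨ξ₀.smulRight x, hξ₀ x⟩ : F →L[ℝ] F) y₀

theorem spatialMap_add (x x' : E) :
    spatialMap φ hξ₀ y₀ (x + x') = spatialMap φ hξ₀ y₀ x + spatialMap φ hξ₀ y₀ x' := by
  have h : (⟨ξ₀.smulRight (x + x'), hξ₀ _⟩ : A₁) =
      ⟨ξ₀.smulRight x, hξ₀ x⟩ + ⟨ξ₀.smulRight x', hξ₀ x'⟩ :=
    Subtype.ext (by ext; simp)
  simp only [spatialMap, h, φ.map_add]
  rfl

theorem spatialMap_apply (a : A₁) (z : E) :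
    spatialMap φ hξ₀ y₀ ((a : E →L[ℝ] E) z) = (φ a : F →L[ℝ] F) (spatialMap φ hξ₀ y₀ z) := by
  have h : (⟨ξ₀.smulRight ((a : E →L[ℝ] E) z), hξ₀ _⟩ : A₁) = a * ⟨ξ₀.smulRight z, hξ₀ z⟩ :=
    Subtype.ext (mul_smulRight _ _ _).symm
  simp only [spatialMap, h, φ.map_mul]
  rfl

variable {x₀ : E} {η₀ : StrongDual ℝ F}

theorem spatialMap_self (hη₀ : η₀ y₀ = 1)
    (he : (φ ⟨ξ₀.smulRight x₀, hξ₀ x₀⟩ : F →L[ℝ] F) = η₀.smulRight y₀) :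
    spatialMap φ hξ₀ y₀ x₀ = y₀ := by
  rw [spatialMap, he, smulRight_apply, hη₀, one_smul]

theorem coe_map_smulRight (hx₀ : ξ₀ x₀ = 1)
    (he : (φ ⟨ξ₀.smulRight x₀, hξ₀ x₀⟩ : F →L[ℝ] F) = η₀.smulRight y₀) (x : E) :
    (φ ⟨ξ₀.smulRight x, hξ₀ x⟩ : F →L[ℝ] F) = η₀.smulRight (spatialMap φ hξ₀ y₀ x) := by
  have h : (⟨ξ₀.smulRight x, hξ₀ x⟩ : A₁) = ⟨ξ₀.smulRight x, hξ₀ x⟩ * ⟨ξ₀.smulRight x₀, hξ₀ x₀⟩ :=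
    Subtype.ext (by rw [MulMemClass.coe_mul, mul_smulRight, smulRight_apply, hx₀, one_smul])
  conv_lhs => rw [h, map_mul, MulMemClass.coe_mul, he, mul_smulRight]
  rfl

theorem spatialMap_smul (hx₀ : ξ₀ x₀ = 1) (hη₀ : η₀ y₀ = 1)
    (he : (φ ⟨ξ₀.smulRight x₀, hξ₀ x₀⟩ : F →L[ℝ] F) = η₀.smulRight y₀) (t : ℝ) (x : E) :
    spatialMap φ hξ₀ y₀ (t • x) = t • spatialMap φ hξ₀ y₀ x := by
  set p : A₁ := ⟨ξ₀.smulRight x₀, hξ₀ x₀⟩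
  have hp := isMinimalIdempotent_smulRight (hξ₀ x₀) hx₀
  have hφ : φ (t • p) = t • φ p := by
    refine φ.map_smul_of_isIdempotentElem hp.1 (hp.map φ).2.1
      (fun c => ⟨η₀ ((c : F →L[ℝ] F) y₀), Subtype.ext ?_⟩) t
    rw [MulMemClass.coe_mul, MulMemClass.coe_mul, he, smulRight_mul_mul_smulRight,
      NonUnitalSubalgebra.coe_smul, he]
  have hx : (⟨ξ₀.smulRight (t • x), hξ₀ _⟩ : A₁) = ⟨ξ₀.smulRight x, hξ₀ x⟩ * (t • p) :=
    Subtype.ext (by ext; simp [p, hx₀]; exact smul_comm _ _ _)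
  simp only [spatialMap, hx, φ.map_mul, hφ]
  rw [MulMemClass.coe_mul, mul_apply_eq_comp, NonUnitalSubalgebra.coe_smul, smul_apply,
    he, smulRight_apply, hη₀, one_smul, map_smul]

theorem spatialMap_eq_zero (hx₀ : ξ₀ x₀ = 1)
    (he : (φ ⟨ξ₀.smulRight x₀, hξ₀ x₀⟩ : F →L[ℝ] F) = η₀.smulRight y₀) {x : E}
    (hx : spatialMap φ hξ₀ y₀ x = 0) : x = 0 := by
  have h0 : (⟨ξ₀.smulRight x, hξ₀ x⟩ : A₁) = 0 := by
    refine φ.injective (Subtype.ext ?_)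
    rw [coe_map_smulRight φ hξ₀ y₀ hx₀ he, hx, smulRight_zero, φ.map_zero]
    rfl
  simpa [hx₀] using congr_arg (fun a : A₁ => (a : E →L[ℝ] E) x₀) h0

theorem spatialMap_surjective (hA₂ : ∀ y, η₀.smulRight y ∈ A₂) (hη₀ : η₀ y₀ = 1)
    (he : (φ ⟨ξ₀.smulRight x₀, hξ₀ x₀⟩ : F →L[ℝ] F) = η₀.smulRight y₀) :
    Function.Surjective (spatialMap φ hξ₀ y₀) := fun y => by
  refine ⟨(φ.symm ⟨η₀.smulRight y, hA₂ y⟩ : E →L[ℝ] E) x₀, ?_⟩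
  rw [spatialMap_apply, RingEquiv.apply_symm_apply, spatialMap_self φ hξ₀ y₀ hη₀ he]
  rw [smulRight_apply, hη₀, one_smul]

theorem continuous_dual_comp_spatialMap (hA₂ : ∀ η : StrongDual ℝ F, η.smulRight y₀ ∈ A₂)
    (hx₀ : ξ₀ x₀ = 1) (hη₀ : η₀ y₀ = 1)
    (he : (φ ⟨ξ₀.smulRight x₀, hξ₀ x₀⟩ : F →L[ℝ] F) = η₀.smulRight y₀)
    (hinj : Function.Injective (spatialMap φ hξ₀ y₀)) (η : StrongDual ℝ F) :
    Continuous (η ∘ spatialMap φ hξ₀ y₀) := by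
  set a : E →L[ℝ] E := ↑(φ.symm ⟨η.smulRight y₀, hA₂ η⟩)
  have ha : ∀ z, a z = η (spatialMap φ hξ₀ y₀ z) • x₀ := fun z => hinj (by
    rw [spatialMap_apply, RingEquiv.apply_symm_apply, spatialMap_smul φ hξ₀ y₀ hx₀ hη₀ he,
      spatialMap_self φ hξ₀ y₀ hη₀ he]
    rfl)
  have hcomp : η ∘ spatialMap φ hξ₀ y₀ = ξ₀ ∘ a := funext fun z => by simp [ha, hx₀]
  rw [hcomp]
  exact ξ₀.continuous.comp a.continuous

theorem nonempty_continuousLinearEquiv_of_ringEquiv [CompleteSpace E] [CompleteSpace F]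
    (hA₂ : ∀ (η : StrongDual ℝ F) y, η.smulRight y ∈ A₂) (hx₀ : ξ₀ x₀ = 1) (hη₀ : η₀ y₀ = 1)
    (he : (φ ⟨ξ₀.smulRight x₀, hξ₀ x₀⟩ : F →L[ℝ] F) = η₀.smulRight y₀) :
    Nonempty (E ≃L[ℝ] F) := by
  let T : E →ₗ[ℝ] F :=
    ⟨⟨spatialMap φ hξ₀ y₀, spatialMap_add φ hξ₀ y₀⟩, spatialMap_smul φ hξ₀ y₀ hx₀ hη₀ he⟩
  have hinj : Function.Injective T :=
    (injective_iff_map_eq_zero T).2 fun _ => spatialMap_eq_zero φ hξ₀ y₀ hx₀ he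
  have hcont : Continuous T := T.continuous_of_forall_continuous_dual_comp
    (continuous_dual_comp_spatialMap φ hξ₀ y₀ (fun η => hA₂ η y₀) hx₀ hη₀ he hinj)
  exact ⟨.ofBijective ⟨T, hcont⟩ (LinearMap.ker_eq_bot.2 hinj)
    (LinearMap.range_eq_top.2 (spatialMap_surjective φ hξ₀ y₀ (hA₂ η₀) hη₀ he))⟩

end Spatial

theorem statement13_general
    (E : Type u) [NormedAddCommGroup E] [NormedSpace ℝ E] [CompleteSpace E]
    (F : Type v) [NormedAddCommGroup F] [NormedSpace ℝ F] [CompleteSpace F]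
    (A₁ : NonUnitalSubalgebra ℝ (E →L[ℝ] E)) (A₂ : NonUnitalSubalgebra ℝ (F →L[ℝ] F))
    (h₁fin : ∀ f : E →L[ℝ] E, FiniteDimensional ℝ (LinearMap.range (f : E →ₗ[ℝ] E)) → f ∈ A₁)
    (h₂fin : ∀ f : F →L[ℝ] F, FiniteDimensional ℝ (LinearMap.range (f : F →ₗ[ℝ] F)) → f ∈ A₂)
    (hiso : Nonempty (A₁ ≃+* A₂)) :
    Nonempty (E ≃L[ℝ] F) := by
  obtain ⟨φ⟩ := hiso
  have hA₁ : ∀ (ξ : StrongDual ℝ E) x, ξ.smulRight x ∈ A₁ := fun ξ x =>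
    h₁fin _ (finiteDimensional_range_smulRight ξ x)
  have hA₂ : ∀ (η : StrongDual ℝ F) y, η.smulRight y ∈ A₂ := fun η y =>
    h₂fin _ (finiteDimensional_range_smulRight η y)
  rcases subsingleton_or_nontrivial E with hE | hE
  · have : Subsingleton A₂ := φ.symm.injective.subsingleton
    obtain ⟨T, -⟩ := (isInvertible_zero_iff (R := ℝ) (M := E) (M₂ := F)).2
      ⟨hE, subsingleton_of_forall_smulRight_mem hA₂⟩
    exact ⟨T⟩
  obtain ⟨x₀, hx₀⟩ := exists_ne (0 : E)
  obtain ⟨ξ₀, hξ₀⟩ := SeparatingDual.exists_eq_one (R := ℝ) hx₀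
  obtain ⟨η₀, y₀, hη₀, he⟩ :=
    ((isMinimalIdempotent_smulRight (hA₁ ξ₀ x₀) hξ₀).map φ).exists_eq_smulRight hA₂
  exact nonempty_continuousLinearEquiv_of_ringEquiv φ (hA₁ ξ₀) y₀ hA₂ hξ₀ hη₀ he

/-- Let `E` and `F` be real Banach spaces, let `A₁` be a closed subalgebra of `B(E)` containing
every bounded linear operator on `E` with finite-dimensional range, and let `A₂` be a closed
subalgebra of `B(F)` containing every bounded finite-rank operator on `F`. If `A₁` and `A₂`
are isomorphic as rings, then `E` and `F` are isomorphic as Banach spaces. -/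
theorem statement13
    (E : Type u) [NormedAddCommGroup E] [NormedSpace ℝ E] [CompleteSpace E]
    (F : Type v) [NormedAddCommGroup F] [NormedSpace ℝ F] [CompleteSpace F]
    (A₁ : NonUnitalSubalgebra ℝ (E →L[ℝ] E)) (A₂ : NonUnitalSubalgebra ℝ (F →L[ℝ] F))
    (h₁closed : IsClosed (A₁ : Set (E →L[ℝ] E)))
    (h₂closed : IsClosed (A₂ : Set (F →L[ℝ] F)))
    (h₁fin : ∀ f : E →L[ℝ] E, FiniteDimensional ℝ (LinearMap.range (f : E →ₗ[ℝ] E)) → f ∈ A₁)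
    (h₂fin : ∀ f : F →L[ℝ] F, FiniteDimensional ℝ (LinearMap.range (f : F →ₗ[ℝ] F)) → f ∈ A₂)
    (hiso : Nonempty (A₁ ≃+* A₂)) :
    Nonempty (E ≃L[ℝ] F) :=
  statement13_general E F A₁ A₂ h₁fin h₂fin hiso
end

section
/- For every ordinal α, the continuous dual space of the Banach space C([0,α],ℝ) is isometrically isomorphic to ℓ¹([0,α]), the Banach space of absolutely summable real-valued families indexed by the set of ordinals ≤ α, with the ℓ¹-norm. -/
/-!
Write `K = [0, α]`. Every `f ∈ ℓ¹(K)` defines the functional `g ↦ ∑ x, f x * g x`, of norm at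
most `‖f‖`. Conversely, a functional `φ` on `C(K, ℝ)` is determined by its distribution function
`γ ↦ φ 1_{[0,γ]}`: in a successor order `[0,γ] = [0, γ + 1)` is clopen, and these indicators span
a dense subalgebra by Stone–Weierstrass. Testing `φ` against `±1` on disjoint clopen intervals
bounds the variation of the distribution function by `‖φ‖`, so it has left limits along the order
and its jumps form an element of `ℓ¹(K)` of norm at most `‖φ‖`. On a well-order a function is
determined by its jumps (well-founded induction), and the jumps of the distribution function of
`g ↦ ∑ x, f x * g x` are exactly `f`; this gives both surjectivity and the reverse norm inequality.
-/

instance (α : Ordinal.{u}) : CompactSpace (Set.Iic α) := by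
  rw [← isCompact_iff_compactSpace, ← Set.Icc_bot]
  exact isCompact_Icc

open Set Filter Topology

section Pairing

variable {X : Type*}

theorem lp.summable_norm_of_one {E : X → Type*} [∀ i, NormedAddCommGroup (E i)] (f : lp E 1) :
    Summable fun i => ‖f i‖ := by
  simpa using (lp.memℓp f).summable (by norm_num)

theorem lp.norm_eq_tsum_norm_of_one {E : X → Type*} [∀ i, NormedAddCommGroup (E i)]
    (f : lp E 1) : ‖f‖ = ∑' i, ‖f i‖ := by
  simpa using lp.norm_eq_tsum_rpow (by norm_num) f

variable [TopologicalSpace X]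

noncomputable def clopenIndicator {s : Set X} (hs : IsClopen s) : C(X, ℝ) :=
  LocallyConstant.charFn ℝ hs

@[simp]
theorem clopenIndicator_apply {s : Set X} (hs : IsClopen s) (x : X) :
    clopenIndicator hs x = s.indicator 1 x :=
  congrFun (LocallyConstant.coe_charFn ℝ hs) x

variable [CompactSpace X]

theorem summable_mul_of_lp_one (f : lp (fun _ : X => ℝ) 1) (g : C(X, ℝ)) :
    Summable fun x => f x * g x :=
  .of_norm_bounded ((lp.summable_norm_of_one f).mul_right ‖g‖) fun x => by
    rw [norm_mul]; gcongr; exact g.norm_coe_le_norm x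

theorem norm_tsum_mul_le_of_lp_one (f : lp (fun _ : X => ℝ) 1) (g : C(X, ℝ)) :
    ‖∑' x, f x * g x‖ ≤ ‖f‖ * ‖g‖ := by
  rw [lp.norm_eq_tsum_norm_of_one, ← tsum_mul_right]
  refine tsum_of_norm_bounded ((lp.summable_norm_of_one f).mul_right ‖g‖).hasSum fun x => ?_
  rw [norm_mul]; gcongr; exact g.norm_coe_le_norm x

noncomputable def lpOnePairing : lp (fun _ : X => ℝ) 1 →L[ℝ] C(X, ℝ) →L[ℝ] ℝ :=
  LinearMap.mkContinuous₂
    (LinearMap.mk₂ ℝ (fun f g => ∑' x, f x * g x)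
      (fun f f' g => by
        simp only [lp.coeFn_add, Pi.add_apply, add_mul]
        exact (summable_mul_of_lp_one f g).tsum_add (summable_mul_of_lp_one f' g))
      (fun c f g => by
        simp only [lp.coeFn_smul, Pi.smul_apply, smul_eq_mul, mul_assoc]
        exact tsum_mul_left)
      (fun f g g' => by
        simp only [ContinuousMap.add_apply, mul_add]
        exact (summable_mul_of_lp_one f g).tsum_add (summable_mul_of_lp_one f g'))
      (fun c f g => by
        simp only [ContinuousMap.smul_apply, smul_eq_mul, mul_left_comm _ c]
        exact tsum_mul_left))
    1 fun f g => (norm_tsum_mul_le_of_lp_one f g).trans_eq (by rw [one_mul])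

theorem lpOnePairing_apply (f : lp (fun _ : X => ℝ) 1) (g : C(X, ℝ)) :
    lpOnePairing f g = ∑' x, f x * g x :=
  rfl

theorem norm_lpOnePairing_le (f : lp (fun _ : X => ℝ) 1) : ‖lpOnePairing f‖ ≤ ‖f‖ :=
  ContinuousLinearMap.opNorm_le_bound _ (norm_nonneg f) (norm_tsum_mul_le_of_lp_one f)

theorem lpOnePairing_clopenIndicator (f : lp (fun _ : X => ℝ) 1) {s : Set X} (hs : IsClopen s) :
    lpOnePairing f (clopenIndicator hs) = ∑' x, s.indicator f x := by
  rw [lpOnePairing_apply]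
  refine tsum_congr fun x => ?_
  by_cases hx : x ∈ s <;> simp [hx]

theorem sum_abs_apply_clopenIndicator_le (φ : C(X, ℝ) →L[ℝ] ℝ) {ι : Type*} (F : Finset ι)
    {s : ι → Set X} (hs : ∀ i, IsClopen (s i)) (hd : (F : Set ι).PairwiseDisjoint s) :
    ∑ i ∈ F, |φ (clopenIndicator (hs i))| ≤ ‖φ‖ := by
  set c : ι → ℝ := fun i => SignType.sign (φ (clopenIndicator (hs i)))
  set g : C(X, ℝ) := ∑ i ∈ F, c i • clopenIndicator (hs i)
  have hg : ‖g‖ ≤ 1 := by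
    refine (ContinuousMap.norm_le _ zero_le_one).2 fun z => ?_
    calc ‖g z‖ = |∑ i ∈ F, c i * (s i).indicator 1 z| := by simp [g]
      _ ≤ ∑ i ∈ F, (s i).indicator 1 z := by
        refine (Finset.abs_sum_le_sum_abs _ _).trans (Finset.sum_le_sum fun i _ => ?_)
        by_cases hz : z ∈ s i
        · simp only [indicator_of_mem hz, Pi.one_apply, mul_one, c]
          cases SignType.sign (φ (clopenIndicator (hs i))) <;> simp
        · simp [hz]
      _ = (⋃ i ∈ F, s i).indicator 1 z := (Finset.indicator_biUnion_apply F s hd z).symm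
      _ ≤ 1 := indicator_apply_le' (fun _ => le_rfl) (fun _ => zero_le_one)
  calc ∑ i ∈ F, |φ (clopenIndicator (hs i))| = φ g := by simp [g, map_sum, c, sign_mul_self]
    _ ≤ ‖φ‖ * ‖g‖ := (le_abs_self _).trans (φ.le_opNorm g)
    _ ≤ ‖φ‖ := mul_le_of_le_one_right φ.opNorm_nonneg hg

end Pairing

section OrderLeftLim

variable {K : Type*} [LinearOrder K] [OrderBot K] {E : Type*} [NormedAddCommGroup E]

/-- The limit of `u β` as `β` increases to `x` through `Iio x`. Unlike `Function.leftLim`, this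
is taken along the order rather than the topology, so at a successor `x = succ p` it is `u p`;
at `⊥` it is `0`, as if `u` vanished below `⊥`. -/
noncomputable def orderLeftLim (u : K → E) (x : K) : E :=
  if x = ⊥ then 0 else limUnder (atTop : Filter (Iio x)) fun β => u β

noncomputable def jump (u : K → E) (x : K) : E :=
  u x - orderLeftLim u x

theorem orderLeftLim_congr {u v : K → E} {x : K} (h : EqOn u v (Iio x)) :
    orderLeftLim u x = orderLeftLim v x := by
  simp only [orderLeftLim]
  congr 2
  funext β
  exact h β.2

theorem Filter.Tendsto.orderLeftLim_eq {u : K → E} {x : K} {l : E} (hx : x ≠ ⊥)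
    (h : Tendsto (fun β : Iio x => u β) atTop (𝓝 l)) : orderLeftLim u x = l := by
  have : Nonempty (Iio x) := ⟨⟨⊥, bot_lt_iff_ne_bot.2 hx⟩⟩
  rw [orderLeftLim, if_neg hx]
  exact h.limUnder_eq

theorem BoundedVariationOn.tendsto_orderLeftLim [CompleteSpace E] {u : K → E} {x : K}
    (hu : BoundedVariationOn u (Iio x)) (hx : x ≠ ⊥) :
    Tendsto (fun β : Iio x => u β) atTop (𝓝 (orderLeftLim u x)) := by
  obtain ⟨l, hl⟩ := hu.exists_tendsto_left_of_filter (map (↑) (atTop : Filter (Iio x)))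
    (fun y hy => mem_map.2 <| mem_of_superset (Ici_mem_atTop ⟨y, hy⟩) fun β hβ => ⟨β.2, hβ⟩)
    ⟨⊥, bot_lt_iff_ne_bot.2 hx⟩
  rw [tendsto_map'_iff] at hl
  rwa [hl.orderLeftLim_eq hx]

theorem eq_of_jump_eq [WellFoundedLT K] {u v : K → E} (h : jump u = jump v) : u = v := by
  funext x
  induction x using WellFoundedLT.induction with
  | _ x ih =>
    have hx := congrFun h x
    rwa [jump, jump, orderLeftLim_congr fun y hy => ih y hy, sub_left_inj] at hx

theorem jump_tsum_indicator_Iic [CompleteSpace E] {f : K → E} (hf : Summable fun y => ‖f y‖) :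
    jump (fun γ => ∑' y, (Iic γ).indicator f y) = f := by
  funext x
  have hlim : orderLeftLim (fun γ => ∑' y, (Iic γ).indicator f y) x =
      ∑' y, (Iio x).indicator f y := by
    rcases eq_or_ne x ⊥ with rfl | hx
    · simp [orderLeftLim]
    refine Tendsto.orderLeftLim_eq hx <| tendsto_tsum_of_dominated_convergence hf (fun y => ?_)
      (Eventually.of_forall fun β y => norm_indicator_le_norm_self f y)
    by_cases hy : y < x
    · rw [indicator_of_mem (mem_Iio.2 hy)]
      exact tendsto_const_nhds.congr' <|
        (eventually_ge_atTop ⟨y, hy⟩).mono fun β hβ =>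
          (indicator_of_mem (show y ∈ Iic (β : K) from hβ) f).symm
    · rw [indicator_of_notMem (notMem_Iio.2 (not_lt.1 hy))]
      exact tendsto_const_nhds.congr' <| Eventually.of_forall fun β =>
        (indicator_of_notMem (show y ∉ Iic (β : K) from fun h => hy (h.trans_lt β.2)) f).symm
  have hsingle (y : K) :
      (Iic x).indicator f y - (Iio x).indicator f y = ({x} : Set K).indicator f y := by
    rw [← Iic_sdiff_Iio_same, indicator_sdiff Iio_subset_Iic_self, Pi.sub_apply]
  rw [jump, hlim, ← (hf.of_norm.indicator _).tsum_sub (hf.of_norm.indicator _),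
    tsum_congr hsingle]
  simp

end OrderLeftLim

section SuccOrder

variable {K : Type*} [LinearOrder K] [TopologicalSpace K] [OrderTopology K] [SuccOrder K]

theorem isClopen_Iic (γ : K) : IsClopen (Iic γ) := by
  refine ⟨isClosed_Iic, ?_⟩
  by_cases hγ : IsMax γ
  · rw [eq_univ_of_forall fun y => mem_Iic.2 (not_lt.1 hγ.not_lt)]
    exact isOpen_univ
  · rw [← Order.Iio_succ_of_not_isMax hγ]
    exact isOpen_Iio

theorem isClopen_Ioc (a b : K) : IsClopen (Ioc a b) := by
  rw [← Iic_sdiff_Iic]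
  exact (isClopen_Iic b).diff (isClopen_Iic a)

noncomputable def dualCdf (φ : C(K, ℝ) →L[ℝ] ℝ) (γ : K) : ℝ :=
  φ (clopenIndicator (isClopen_Iic γ))

theorem apply_clopenIndicator_Ioc (φ : C(K, ℝ) →L[ℝ] ℝ) {a b : K} (hab : a ≤ b) :
    φ (clopenIndicator (isClopen_Ioc a b)) = dualCdf φ b - dualCdf φ a := by
  rw [dualCdf, dualCdf, ← map_sub]
  congr 1
  ext z
  simp [← Iic_sdiff_Iic, indicator_sdiff (Iic_subset_Iic.2 hab)]

variable [CompactSpace K]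

theorem boundedVariationOn_dualCdf (φ : C(K, ℝ) →L[ℝ] ℝ) :
    BoundedVariationOn (dualCdf φ) univ := by
  refine ne_top_of_le_ne_top (ENNReal.ofReal_ne_top (r := ‖φ‖))
    (iSup_le fun ⟨n, u, hu, _⟩ => ?_)
  calc ∑ i ∈ Finset.range n, edist (dualCdf φ (u (i + 1))) (dualCdf φ (u i))
      = ENNReal.ofReal
          (∑ i ∈ Finset.range n, |φ (clopenIndicator (isClopen_Ioc (u i) (u (i + 1))))|) := by
        rw [ENNReal.ofReal_sum_of_nonneg fun _ _ => abs_nonneg _]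
        refine Finset.sum_congr rfl fun i _ => ?_
        rw [edist_dist, Real.dist_eq, apply_clopenIndicator_Ioc φ (hu i.le_succ)]
    _ ≤ ENNReal.ofReal ‖φ‖ := ENNReal.ofReal_le_ofReal <|
        sum_abs_apply_clopenIndicator_le φ _ _ (hu.pairwise_disjoint_on_Ioc_succ.set_pairwise _)

theorem dense_span_clopenIndicator_Iic [OrderTop K] :
    Dense (Submodule.span ℝ (range fun γ : K => clopenIndicator (isClopen_Iic γ)) :
      Set C(K, ℝ)) := by
  set e := fun γ : K => clopenIndicator (isClopen_Iic γ)
  let M : Submonoid C(K, ℝ) :=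
    { carrier := range e
      mul_mem' := by
        rintro _ _ ⟨γ, rfl⟩ ⟨δ, rfl⟩
        refine ⟨min γ δ, ?_⟩
        ext z
        by_cases hγ : z ≤ γ <;> by_cases hδ : z ≤ δ <;> simp [e, hγ, hδ]
      one_mem' := ⟨⊤, by ext z; simp [e]⟩ }
  have hspan :
      Submodule.span ℝ (range e) = Subalgebra.toSubmodule (Algebra.adjoin ℝ (range e)) := by
    rw [Algebra.adjoin_eq_span, show Submonoid.closure (range e) = M from Submonoid.closure_eq M]
    rfl
  have hsep : (Algebra.adjoin ℝ (range e)).SeparatesPoints := by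
    intro x y hxy
    refine ⟨_, ⟨e (min x y), Algebra.subset_adjoin ⟨_, rfl⟩, rfl⟩, ?_⟩
    rcases hxy.lt_or_gt with h | h <;> simp [e, h.le, h.not_ge]
  rw [hspan]
  change Dense (Algebra.adjoin ℝ (range e) : Set C(K, ℝ))
  rw [dense_iff_closure_eq, ← Subalgebra.topologicalClosure_coe,
    ContinuousMap.subalgebra_topologicalClosure_eq_top_of_separatesPoints _ hsep]
  rfl

variable [OrderBot K]

theorem exists_clopen_approx_jump (φ : C(K, ℝ) →L[ℝ] ℝ) (F : Finset K) (x : K) {δ : ℝ}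
    (hδ : 0 < δ) : ∃ (s : Set K) (hs : IsClopen s), s ⊆ Iic x ∧
      (∀ y ∈ F, y < x → Disjoint s (Iic y)) ∧
      |jump (dualCdf φ) x| ≤ |φ (clopenIndicator hs)| + δ := by
  rcases eq_or_ne x ⊥ with rfl | hx
  · refine ⟨Iic ⊥, isClopen_Iic ⊥, subset_rfl, fun y _ hy => absurd hy not_lt_bot, ?_⟩
    simp [jump, orderLeftLim, dualCdf, hδ.le]
  have : Nonempty (Iio x) := ⟨⟨⊥, bot_lt_iff_ne_bot.2 hx⟩⟩
  have hlim := ((boundedVariationOn_dualCdf φ).mono (subset_univ _)).tendsto_orderLeftLim hx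
  have hF : ∀ᶠ β : Iio x in atTop, ∀ y ∈ F, y < x → y ≤ β := by
    refine (eventually_all_finset F).2 fun y _ => ?_
    by_cases hy : y < x
    · exact (eventually_ge_atTop ⟨y, hy⟩).mono fun β hβ _ => hβ
    · exact Eventually.of_forall fun β h => absurd h hy
  obtain ⟨β, hβ, hβF⟩ := ((Metric.tendsto_nhds.1 hlim δ hδ).and hF).exists
  refine ⟨Ioc β x, isClopen_Ioc _ _, Ioc_subset_Iic_self, fun y hy hyx => ?_, ?_⟩
  · exact disjoint_left.2 fun z hz hzy => (hz.1.trans_le hzy).not_ge (hβF y hy hyx)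
  · rw [Real.dist_eq] at hβ
    rw [jump, apply_clopenIndicator_Ioc φ β.2.le]
    exact (abs_sub_le _ (dualCdf φ β) _).trans (by linarith)

theorem sum_abs_jump_dualCdf_le (φ : C(K, ℝ) →L[ℝ] ℝ) (F : Finset K) :
    ∑ x ∈ F, |jump (dualCdf φ) x| ≤ ‖φ‖ := by
  suffices h : ∀ δ > 0, ∑ x ∈ F, |jump (dualCdf φ) x| ≤ ‖φ‖ + F.card * δ by
    have : Tendsto (fun δ : ℝ => ‖φ‖ + F.card * δ) (𝓝[>] 0) (𝓝 ‖φ‖) := by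
      simpa using tendsto_nhdsWithin_of_tendsto_nhds
        (tendsto_const_nhds.add (tendsto_const_nhds.mul tendsto_id) :
          Tendsto (fun δ : ℝ => ‖φ‖ + F.card * δ) (𝓝 0) (𝓝 (‖φ‖ + F.card * 0)))
    exact ge_of_tendsto this (eventually_nhdsWithin_of_forall h)
  intro δ hδ
  choose s hs hsx hsF happrox using fun x => exists_clopen_approx_jump φ F x hδ
  have hdisj : (F : Set K).PairwiseDisjoint s := by
    intro x hx y hy hxy
    rcases hxy.lt_or_gt with h | h
    · exact (hsF y x hx h).symm.mono_left (hsx x)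
    · exact (hsF x y hy h).mono_right (hsx y)
  calc ∑ x ∈ F, |jump (dualCdf φ) x| ≤ ∑ x ∈ F, (|φ (clopenIndicator (hs x))| + δ) :=
        Finset.sum_le_sum fun x _ => happrox x
    _ = ∑ x ∈ F, |φ (clopenIndicator (hs x))| + F.card * δ := by
        rw [Finset.sum_add_distrib, Finset.sum_const, nsmul_eq_mul]
    _ ≤ ‖φ‖ + F.card * δ := by gcongr; exact sum_abs_apply_clopenIndicator_le φ F hs hdisj

end SuccOrder

section Duality

variable {K : Type*} [LinearOrder K] [TopologicalSpace K] [OrderTopology K] [SuccOrder K]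
  [OrderBot K] [CompactSpace K]

theorem jump_dualCdf_lpOnePairing (f : lp (fun _ : K => ℝ) 1) :
    jump (dualCdf (lpOnePairing f)) = f := by
  have : dualCdf (lpOnePairing f) = fun γ => ∑' y, (Iic γ).indicator f y :=
    funext fun γ => lpOnePairing_clopenIndicator f _
  rw [this]
  exact jump_tsum_indicator_Iic (lp.summable_norm_of_one f)

theorem norm_le_norm_lpOnePairing (f : lp (fun _ : K => ℝ) 1) : ‖f‖ ≤ ‖lpOnePairing f‖ := by
  refine lp.norm_le_of_forall_sum_le (by norm_num) (norm_nonneg (lpOnePairing f)) fun F => ?_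
  simpa [jump_dualCdf_lpOnePairing] using sum_abs_jump_dualCdf_le (lpOnePairing f) F

noncomputable def dualAtoms (φ : C(K, ℝ) →L[ℝ] ℝ) : lp (fun _ : K => ℝ) 1 :=
  ⟨jump (dualCdf φ), memℓp_gen' fun F => by simpa using sum_abs_jump_dualCdf_le φ F⟩

theorem lpOnePairing_dualAtoms [WellFoundedLT K] [OrderTop K] (φ : C(K, ℝ) →L[ℝ] ℝ) :
    lpOnePairing (dualAtoms φ) = φ := by
  refine ContinuousLinearMap.ext_on dense_span_clopenIndicator_Iic ?_
  rintro _ ⟨γ, rfl⟩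
  exact congrFun (eq_of_jump_eq (jump_dualCdf_lpOnePairing (dualAtoms φ))) γ

noncomputable def lpOneEquivDual [WellFoundedLT K] [OrderTop K] :
    lp (fun _ : K => ℝ) 1 ≃ₗᵢ[ℝ] (C(K, ℝ) →L[ℝ] ℝ) :=
  LinearIsometryEquiv.ofSurjective
    { toLinearMap := lpOnePairing.toLinearMap
      norm_map' := fun f => (norm_lpOnePairing_le f).antisymm (norm_le_norm_lpOnePairing f) }
    fun φ => ⟨dualAtoms φ, lpOnePairing_dualAtoms φ⟩

end Duality

/-- For every ordinal `α`, the continuous dual space of the Banach space `C([0,α], ℝ)` is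
isometrically isomorphic to `ℓ¹([0,α])`, the Banach space of absolutely summable real-valued
families indexed by the set of ordinals `≤ α`, with the `ℓ¹`-norm. -/
theorem statement15 (α : Ordinal.{u}) :
    Nonempty ((C(Set.Iic α, ℝ) →L[ℝ] ℝ) ≃ₗᵢ[ℝ] lp (fun _ : Set.Iic α => ℝ) 1) :=
  ⟨lpOneEquivDual.symm⟩
end
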